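/- Let M and N be λ-terms. If there is no reduct M' of M (i.e. no M' with M ↠β M') such that cBT(M') ≤ cBT(N), then M ≠β N. -/

import Mathlib

/-- Untyped λ-terms in de Bruijn notation (the variables are `ℕ`). -/
inductive Lam : Type
  | var : ℕ → Lam
  | app : Lam → Lam → Lam
  | abs : Lam → Lam
  deriving DecidableEq

namespace Lam

/-- Shift the free de Bruijn indices `≥ d` up by one. -/
def lift (d : ℕ) : Lam → Lam
  | var n => if n < d then var n else var (n + 1)
  | app s t => app (lift d s) (lift d t)
  | abs t => abs (lift (d + 1) t)

/-- Capture-avoiding substitution `t[k := u]`. -/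
def subst : Lam → ℕ → Lam → Lam
  | var n, k, u => if n < k then var n else if n = k then u else var (n - 1)
  | app s t, k, u => app (subst s k u) (subst t k u)
  | abs t, k, u => abs (subst t (k + 1) (lift 0 u))

/-- One-step β-reduction `→β`: the compatible closure of the β-rule. -/
inductive Beta : Lam → Lam → Prop
  | beta (t u : Lam) : Beta (Lam.app (Lam.abs t) u) (subst t 0 u)
  | appL {s s' : Lam} (t : Lam) : Beta s s' → Beta (Lam.app s t) (Lam.app s' t)
  | appR (s : Lam) {t t' : Lam} : Beta t t' → Beta (Lam.app s t) (Lam.app s t')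
  | abs {t t' : Lam} : Beta t t' → Beta (Lam.abs t) (Lam.abs t')

/-- `↠β`: the reflexive–transitive closure of `→β`. -/
def BetaStar : Lam → Lam → Prop := Relation.ReflTransGen Beta

/-- `→β^k`: the `k`-fold composition of `→β`. -/
def BetaN : ℕ → Lam → Lam → Prop
  | 0, s, t => s = t
  | k + 1, s, t => ∃ u, Beta s u ∧ BetaN k u t

/-- `=β`, β-convertibility: the equivalence closure of `→β`. -/
inductive Conv : Lam → Lam → Prop
  | rel {s t : Lam} : Beta s t → Conv s t
  | refl (s : Lam) : Conv s s
  | symm {s t : Lam} : Conv s t → Conv t s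
  | trans {s t u : Lam} : Conv s t → Conv t u → Conv s u

/-- The free variables of a term (as de Bruijn indices). -/
def FV : Lam → Finset ℕ
  | var n => {n}
  | app s t => FV s ∪ FV t
  | abs t => ((FV t).erase 0).image (· - 1)

/-- `Y` is a fixed point combinator (fpc): `Y x =β x (Y x)` for a variable `x` not free in `Y`. -/
def IsFPC (Y : Lam) : Prop :=
  ∀ x : ℕ, x ∉ FV Y → Conv (app Y (var x)) (app (var x) (app Y (var x)))

/-- `I = λx.x` -/
def combI : Lam := abs (var 0)

/-- `S = λxyz.xz(yz)` -/
def combS : Lam := abs (abs (abs (app (app (var 2) (var 0)) (app (var 1) (var 0)))))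

/-- `B = λxyz.x(yz)` -/
def combB : Lam := abs (abs (abs (app (var 2) (app (var 1) (var 0)))))

/-- `δ = λab.b(ab)` -/
def delta : Lam := abs (abs (app (var 0) (app (var 1) (var 0))))

/-- `η = λxf.f(xxf)` -/
def etaC : Lam := abs (abs (app (var 0) (app (app (var 1) (var 1)) (var 0))))

/-- Curry's fpc `Y₀ = λf.(λx.f(xx))(λx.f(xx))` -/
def curryY : Lam :=
  abs (app (abs (app (var 1) (app (var 0) (var 0))))
    (abs (app (var 1) (app (var 0) (var 0)))))

/-- `A B ⋯ B`: `A` applied to `n` copies of `B`, associating to the left. -/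
def appN (A B : Lam) : ℕ → Lam
  | 0 => A
  | n + 1 => app (appN A B n) B

/-- `M N₁ ⋯ Nₘ`: `M` applied to the terms in `L`, associating to the left. -/
def appList (M : Lam) (L : List Lam) : Lam := L.foldl app M

/-- `M` is an abstraction. -/
def IsAbs : Lam → Prop
  | abs _ => True
  | _ => False

/-- A head reduction step:
    `λx₁…xₙ.(λy.M)N N₁…Nₘ →h λx₁…xₙ.M[y:=N] N₁…Nₘ`. -/
inductive HeadStep : Lam → Lam → Prop
  | beta (t u : Lam) : HeadStep (Lam.app (Lam.abs t) u) (subst t 0 u)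
  | app {s s' : Lam} (t : Lam) : ¬ IsAbs s → HeadStep s s' → HeadStep (Lam.app s t) (Lam.app s' t)
  | abs {t t' : Lam} : HeadStep t t' → HeadStep (Lam.abs t) (Lam.abs t')

/-- `→h^k`: `k`-fold head reduction. -/
def HeadSteps : ℕ → Lam → Lam → Prop
  | 0, s, t => s = t
  | k + 1, s, t => ∃ u, HeadStep s u ∧ HeadSteps k u t

/-- `λ^n.t`: `n` abstractions in front of `t`. -/
def absN : ℕ → Lam → Lam
  | 0, t => t
  | n + 1, t => abs (absN n t)

/-- The head normal form `λx₁…xₙ. y A₁ ⋯ Aₘ` (de Bruijn head variable `y`). -/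
def mkHnf (n y : ℕ) (args : List Lam) : Lam := absN n (appList (var y) args)

/-- Head normal forms. -/
def IsHnf (M : Lam) : Prop := ∃ n y args, M = mkHnf n y args

/-- `M` has a head normal form (its head reduction reaches an hnf). -/
def HasHnf (M : Lam) : Prop := ∃ k H, HeadSteps k M H ∧ IsHnf H

/-- Nodes of a (clocked) Böhm Tree, seen as an infinite λ⊥-term. -/
inductive BTN : Type
  | lam : BTN
  | app : BTN
  | var : ℕ → BTN
  | bot : BTN
  deriving DecidableEq

/-- `CBT M p o a`: in the clocked Böhm Tree of `M`, the position `p`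
    (a sequence over `{0,1,2}`: `0` descends under an abstraction, `1` and `2` to the
    left and right parts of an application) carries the node `o` with annotation `a`
    (`a = some k` exactly at the roots of the coinductive blocks, where `k` is the number
    of head reduction steps needed to reach the hnf producing that block). -/
inductive CBT : Lam → List ℕ → BTN → Option ℕ → Prop
  | bot {M : Lam} : ¬ HasHnf M → CBT M [] BTN.bot none
  | lam {M : Lam} {k n y : ℕ} {args : List Lam} {i : ℕ} :
      HeadSteps k M (mkHnf n y args) → i < n →
      CBT M (List.replicate i 0) BTN.lam (if i = 0 then some k else none)
  | app {M : Lam} {k n y : ℕ} {args : List Lam} {j : ℕ} :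
      HeadSteps k M (mkHnf n y args) → j < args.length →
      CBT M (List.replicate n 0 ++ List.replicate j 1) BTN.app
        (if n = 0 ∧ j = 0 then some k else none)
  | var {M : Lam} {k n y : ℕ} {args : List Lam} :
      HeadSteps k M (mkHnf n y args) →
      CBT M (List.replicate n 0 ++ List.replicate args.length 1) (BTN.var y)
        (if n = 0 ∧ args.length = 0 then some k else none)
  | child {M : Lam} {k n y : ℕ} {args : List Lam} {i : ℕ} {q : List ℕ} {o : BTN} {a : Option ℕ} :
      HeadSteps k M (mkHnf n y args) → (h : i < args.length) →
      CBT (args.get ⟨i, h⟩) q o a →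
      CBT M (List.replicate n 0 ++ List.replicate (args.length - 1 - i) 1 ++ 2 :: q) o a

/-- The underlying (annotation-free) Böhm Tree: node `o` at position `p`. -/
def BTNode (M : Lam) (p : List ℕ) (o : BTN) : Prop := ∃ a, CBT M p o a

/-- `cBT M` and `cBT N` have the same underlying (annotation-free) Böhm Tree. -/
def SameBT (M N : Lam) : Prop := ∀ (p : List ℕ) (o : BTN), BTNode M p o ↔ BTNode N p o

/-- At every position of length `≥ l` where both clocked Böhm Trees are annotated,
    the annotation of `cBT M` is `≤` the annotation of `cBT N`. -/
def AnnLeFrom (l : ℕ) (M N : Lam) : Prop :=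
  ∀ (p : List ℕ) (o₁ o₂ : BTN) (k₁ k₂ : ℕ), l ≤ p.length →
    CBT M p o₁ (some k₁) → CBT N p o₂ (some k₂) → k₁ ≤ k₂

/-- At every position of length `≥ l` where both clocked Böhm Trees are annotated,
    the annotations of `cBT M` and `cBT N` are equal. -/
def AnnEqFrom (l : ℕ) (M N : Lam) : Prop :=
  ∀ (p : List ℕ) (o₁ o₂ : BTN) (k₁ k₂ : ℕ), l ≤ p.length →
    CBT M p o₁ (some k₁) → CBT N p o₂ (some k₂) → k₁ = k₂

/-- `cBT M ≤ cBT N`: same underlying Böhm Tree and pointwise `≤` on annotations;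
    i.e. `M` improves `N` globally. -/
def CBTle (M N : Lam) : Prop := SameBT M N ∧ AnnLeFrom 0 M N

/-- `M` improves `N` eventually. -/
def ImprovesEventually (M N : Lam) : Prop := SameBT M N ∧ ∃ l, AnnLeFrom l M N

/-- `M` matches `N` eventually. -/
def MatchesEventually (M N : Lam) : Prop := SameBT M N ∧ ∃ l, AnnEqFrom l M N

/-!
By Church–Rosser, `M =β N` yields a common reduct `L` of `M` and `N`, so it suffices to show
`cBT L ≤ cBT N` whenever `N ↠β L`. A parallel step either absorbs a head step or matches it by
one head step, so reduction maps the hnf `λx̄. y Ā` of `N` to an hnf `λx̄. y Ā'` of `L`, with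
`Ā ↠β Ā'`, in no more head steps. Conversely, if `L` has an hnf then so has `N`: by
Takahashi's method a parallel step factors as head steps followed by an internal parallel step,
and internal steps can be postponed past head steps. Applying this at every node, `cBT N` and
`cBT L` have the same nodes, and since a clocked Böhm tree has at most one node per position,
the clocks of `L` are bounded by those of `N`.
-/

/-! ### Lifting and substitution -/

theorem subst_lift (t : Lam) : ∀ k u, subst (lift k t) k u = t := by
  induction t with
  | var n =>
    intro k u
    simp only [lift]
    split_ifs <;> simp only [subst] <;> split_ifs <;>
      first | rfl | (congr 1; omega)
  | app s t ihs iht => intro k u; simp only [lift, subst, ihs, iht]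
  | abs t ih => intro k u; simp only [lift, subst, ih]

theorem lift_lift_of_le (t : Lam) : ∀ {i j}, i ≤ j →
    lift i (lift j t) = lift (j + 1) (lift i t) := by
  induction t with
  | var n =>
    intro i j hij
    simp only [lift]
    split_ifs <;> simp only [lift] <;> split_ifs <;>
      first | rfl | (congr 1; omega)
  | app s t ihs iht => intro i j hij; simp only [lift, ihs hij, iht hij]
  | abs t ih => intro i j hij; simp only [lift, ih (Nat.succ_le_succ hij)]

theorem lift_subst_of_le (t : Lam) : ∀ {i k} u, i ≤ k →
    lift i (subst t k u) = subst (lift i t) (k + 1) (lift i u) := by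
  induction t with
  | var n =>
    intro i k u hik
    simp only [subst]
    split_ifs <;> simp only [lift] <;> split_ifs <;> simp only [subst] <;> split_ifs <;>
      first | rfl | (congr 1; omega)
  | app s t ihs iht => intro i k u hik; simp only [lift, subst, ihs u hik, iht u hik]
  | abs t ih =>
    intro i k u hik
    simp only [lift, subst]
    rw [ih _ (Nat.succ_le_succ hik), lift_lift_of_le u (Nat.zero_le i)]

theorem lift_subst_of_ge (t : Lam) : ∀ {i k} u, k ≤ i →
    lift i (subst t k u) = subst (lift (i + 1) t) k (lift i u) := by
  induction t with
  | var n =>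
    intro i k u hki
    simp only [subst]
    split_ifs <;> simp only [lift] <;> split_ifs <;> simp only [subst] <;> split_ifs <;>
      first | rfl | (congr 1; omega)
  | app s t ihs iht => intro i k u hki; simp only [lift, subst, ihs u hki, iht u hki]
  | abs t ih =>
    intro i k u hki
    simp only [lift, subst]
    rw [ih _ (Nat.succ_le_succ hki), lift_lift_of_le u (Nat.zero_le i)]

theorem subst_var_lt {n k : ℕ} (u : Lam) (h : n < k) : subst (var n) k u = var n := by
  simp only [subst, if_pos h]

theorem subst_var_self (n : ℕ) (u : Lam) : subst (var n) n u = u := by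
  simp only [subst, lt_irrefl, if_false, if_true]

theorem subst_var_gt {n k : ℕ} (u : Lam) (h : k < n) : subst (var n) k u = var (n - 1) := by
  simp only [subst, if_neg (Nat.not_lt.2 h.le), if_neg h.ne']

theorem subst_subst_of_le (t : Lam) : ∀ {i k} u v, i ≤ k →
    subst (subst t i u) k v = subst (subst t (k + 1) (lift i v)) i (subst u k v) := by
  induction t with
  | var n =>
    intro i k u v hik
    rcases lt_trichotomy n i with h | rfl | h
    · rw [subst_var_lt u h, subst_var_lt v (by omega), subst_var_lt _ (by omega),
        subst_var_lt _ h]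
    · rw [subst_var_self, subst_var_lt _ (by omega), subst_var_self]
    · rw [subst_var_gt u h]
      rcases lt_trichotomy n (k + 1) with h' | rfl | h'
      · rw [subst_var_lt _ (by omega), subst_var_lt _ h', subst_var_gt _ h]
      · rw [subst_var_self, Nat.add_sub_cancel, subst_var_self, subst_lift]
      · rw [subst_var_gt _ (by omega), subst_var_gt _ h', subst_var_gt _ (by omega)]
  | app s t ihs iht =>
    intro i k u v hik; simp only [subst, ihs u v hik, iht u v hik]
  | abs t ih =>
    intro i k u v hik
    simp only [subst]
    rw [ih _ _ (Nat.succ_le_succ hik), lift_lift_of_le v (Nat.zero_le i),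
      lift_subst_of_le u v (Nat.zero_le k)]

/-! ### Parallel reduction and confluence -/

inductive Par : Lam → Lam → Prop
  | var (n : ℕ) : Par (var n) (var n)
  | app {s s' t t' : Lam} : Par s s' → Par t t' → Par (app s t) (app s' t')
  | abs {t t' : Lam} : Par t t' → Par (abs t) (abs t')
  | beta {t t' u u' : Lam} : Par t t' → Par u u' → Par (app (abs t) u) (subst t' 0 u')

namespace Par

theorem refl : ∀ t : Lam, Par t t
  | .var n => .var n
  | .app s t => .app (refl s) (refl t)
  | .abs t => .abs (refl t)

theorem lift {t t' : Lam} (h : Par t t') : ∀ d, Par (Lam.lift d t) (Lam.lift d t') := by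
  induction h with
  | var n => intro d; exact refl _
  | app _ _ ihs iht => intro d; exact .app (ihs d) (iht d)
  | abs _ ih => intro d; exact .abs (ih (d + 1))
  | @beta t t' u u' _ _ iht ihu =>
    intro d
    simp only [Lam.lift]
    rw [lift_subst_of_ge t' u' (Nat.zero_le d)]
    exact .beta (iht (d + 1)) (ihu d)

theorem subst {t t' : Lam} (h : Par t t') :
    ∀ k {u u' : Lam}, Par u u' → Par (Lam.subst t k u) (Lam.subst t' k u') := by
  induction h with
  | var n =>
    intro k u u' hu
    rcases lt_trichotomy n k with h | rfl | h
    · rw [subst_var_lt u h, subst_var_lt u' h]; exact .var n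
    · rwa [subst_var_self, subst_var_self]
    · rw [subst_var_gt u h, subst_var_gt u' h]; exact .var _
  | app _ _ ihs iht => intro k u u' hu; exact .app (ihs k hu) (iht k hu)
  | abs _ ih => intro k u u' hu; exact .abs (ih (k + 1) (hu.lift 0))
  | @beta a a' b b' _ _ iha ihb =>
    intro k u u' hu
    simp only [Lam.subst]
    rw [subst_subst_of_le a' b' u' (Nat.zero_le k)]
    exact .beta (iha (k + 1) (hu.lift 0)) (ihb k hu)

theorem var_inv {n : ℕ} {X : Lam} (h : Par (.var n) X) : X = .var n := by
  cases h; rfl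

theorem abs_inv {t X : Lam} (h : Par (.abs t) X) : ∃ t', X = .abs t' ∧ Par t t' := by
  cases h with
  | abs h => exact ⟨_, rfl, h⟩

theorem app_inv {s t X : Lam} (h : Par (.app s t) X) (hs : ¬ IsAbs s) :
    ∃ s' t', X = .app s' t' ∧ Par s s' ∧ Par t t' := by
  cases h with
  | app h₁ h₂ => exact ⟨_, _, rfl, h₁, h₂⟩
  | beta => exact absurd trivial hs

end Par

theorem Beta.par {s t : Lam} (h : Beta s t) : Par s t := by
  induction h with
  | beta t u => exact .beta (.refl t) (.refl u)
  | appL t _ ih => exact .app ih (.refl t)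
  | appR s _ ih => exact .app (.refl s) ih
  | abs _ ih => exact .abs ih

theorem BetaStar.appL {s s' : Lam} (t : Lam) (h : BetaStar s s') :
    BetaStar (app s t) (app s' t) :=
  h.lift (app · t) fun _ _ => Beta.appL t

theorem BetaStar.appR (s : Lam) {t t' : Lam} (h : BetaStar t t') :
    BetaStar (app s t) (app s t') :=
  h.lift (app s) fun _ _ => Beta.appR s

theorem BetaStar.abs {t t' : Lam} (h : BetaStar t t') : BetaStar (abs t) (abs t') :=
  h.lift Lam.abs fun _ _ => Beta.abs

theorem Par.betaStar {s t : Lam} (h : Par s t) : BetaStar s t := by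
  induction h with
  | var n => exact .refl
  | app _ _ ihs iht => exact (ihs.appL _).trans (iht.appR _)
  | abs _ ih => exact ih.abs
  | @beta t t' u u' _ _ iht ihu =>
    exact ((iht.abs.appL _).trans (ihu.appR _)).tail (Beta.beta t' u')

def develop : Lam → Lam
  | var n => var n
  | abs t => abs (develop t)
  | app (abs t) u => subst (develop t) 0 (develop u)
  | app s u => app (develop s) (develop u)

theorem Par.triangle {s t : Lam} (h : Par s t) : Par t (develop s) := by
  induction h with
  | var n => exact .refl _
  | @app s s' t t' hs _ ihs iht =>
    cases s with
    | abs w =>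
      obtain ⟨w', rfl, -⟩ := hs.abs_inv
      obtain ⟨_, h, hw⟩ := ihs.abs_inv
      cases h
      exact .beta hw iht
    | _ => exact .app ihs iht
  | abs _ ih => exact .abs ih
  | beta _ _ iht ihu => exact iht.subst 0 ihu

theorem Conv.exists_common_reduct {M N : Lam} (h : Conv M N) :
    ∃ L, BetaStar M L ∧ BetaStar N L := by
  have hequiv := Relation.equivalence_join_reflTransGen (r := Par) fun a _ _ hb hc =>
    ⟨develop a, .single hb.triangle, .single hc.triangle⟩
  have hjoin : Relation.Join (Relation.ReflTransGen Par) M N := by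
    induction h with
    | rel h => exact ⟨_, .single h.par, .refl⟩
    | refl s => exact hequiv.refl s
    | symm _ ih => exact hequiv.symm ih
    | trans _ _ ih₁ ih₂ => exact hequiv.trans ih₁ ih₂
  obtain ⟨L, hM, hN⟩ := hjoin
  have hpar : Relation.ReflTransGen Par ≤ BetaStar :=
    Relation.ReflTransGen.lift' id fun _ _ h => Par.betaStar h
  exact ⟨L, hpar _ _ hM, hpar _ _ hN⟩

/-! ### Head reduction and head normal forms -/

abbrev HeadStar : Lam → Lam → Prop := Relation.ReflTransGen HeadStep

theorem HeadSteps.add {k j : ℕ} {a b c : Lam} (h₁ : HeadSteps k a b) (h₂ : HeadSteps j b c) :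
    HeadSteps (k + j) a c := by
  induction k generalizing a with
  | zero => cases h₁; simpa using h₂
  | succ k ih =>
    obtain ⟨u, hu, h₁⟩ := h₁
    rw [Nat.add_right_comm]
    exact ⟨u, hu, ih h₁⟩

theorem headStar_iff_exists_headSteps {a b : Lam} : HeadStar a b ↔ ∃ k, HeadSteps k a b := by
  constructor
  · intro h
    induction h with
    | refl => exact ⟨0, rfl⟩
    | tail _ h ih =>
      obtain ⟨k, hk⟩ := ih
      exact ⟨k + 1, hk.add ⟨_, h, rfl⟩⟩
  · rintro ⟨k, h⟩
    induction k generalizing a with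
    | zero => cases h; exact .refl
    | succ k ih =>
      obtain ⟨u, hu, h⟩ := h
      exact .head hu (ih h)

theorem HasHnf.of_headStar {a b : Lam} (h : HeadStar a b) (hb : HasHnf b) : HasHnf a := by
  obtain ⟨j, hj⟩ := headStar_iff_exists_headSteps.1 h
  obtain ⟨k, H, hk, hH⟩ := hb
  exact ⟨j + k, H, hj.add hk, hH⟩

theorem hasHnf_of_headSteps {M : Lam} {k n y : ℕ} {args : List Lam}
    (h : HeadSteps k M (mkHnf n y args)) : HasHnf M :=
  ⟨k, _, h, n, y, args, rfl⟩

theorem isAbs_iff {t : Lam} : IsAbs t ↔ ∃ w, t = abs w := by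
  cases t <;> simp [IsAbs]

theorem not_isAbs_app (a b : Lam) : ¬ IsAbs (app a b) := id

theorem isAbs_lift {d : ℕ} {s : Lam} : IsAbs (lift d s) ↔ IsAbs s := by
  cases s with
  | var n => simp only [lift]; split <;> simp [IsAbs]
  | _ => simp [lift, IsAbs]

theorem HeadStep.det {a b c : Lam} (h₁ : HeadStep a b) (h₂ : HeadStep a c) : b = c := by
  induction h₁ generalizing c with
  | beta t u =>
    cases h₂ with
    | beta => rfl
    | app _ hna => exact absurd trivial hna
  | app t hna _ ih =>
    cases h₂ with
    | beta => exact absurd trivial hna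
    | app _ _ h₂ => rw [ih h₂]
  | abs _ ih =>
    cases h₂ with
    | abs h₂ => rw [ih h₂]

inductive Spine : Lam → Prop
  | var (n : ℕ) : Spine (var n)
  | app {s : Lam} (t : Lam) : Spine s → Spine (app s t)

inductive HeadNormal : Lam → Prop
  | spine {t : Lam} : Spine t → HeadNormal t
  | abs {t : Lam} : HeadNormal t → HeadNormal (abs t)

theorem spine_appList (y : ℕ) (args : List Lam) : Spine (appList (var y) args) := by
  induction args using List.reverseRecOn with
  | nil => exact .var y
  | append_singleton l a ih =>
    simpa only [appList, List.foldl_append, List.foldl_cons, List.foldl_nil] using ih.app a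

theorem Spine.exists_eq_appList {t : Lam} (h : Spine t) :
    ∃ y args, t = appList (Lam.var y) args := by
  induction h with
  | var n => exact ⟨n, [], rfl⟩
  | app t _ ih =>
    obtain ⟨y, args, rfl⟩ := ih
    exact ⟨y, args ++ [t], by simp [appList, List.foldl_append]⟩

theorem isHnf_iff_headNormal {t : Lam} : IsHnf t ↔ HeadNormal t := by
  constructor
  · rintro ⟨n, y, args, rfl⟩
    induction n with
    | zero => exact .spine (spine_appList y args)
    | succ n ih => exact .abs ih
  · intro h
    induction h with
    | spine h =>
      obtain ⟨y, args, rfl⟩ := h.exists_eq_appList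
      exact ⟨0, y, args, rfl⟩
    | abs _ ih =>
      obtain ⟨n, y, args, rfl⟩ := ih
      exact ⟨n + 1, y, args, rfl⟩

theorem Spine.not_isAbs {t : Lam} (h : Spine t) : ¬ IsAbs t := by
  cases h <;> exact id

theorem Spine.not_headStep {t X : Lam} (h : Spine t) : ¬ HeadStep t X := by
  induction h generalizing X with
  | var n => intro hs; cases hs
  | app t hsp ih =>
    intro hs
    cases hs with
    | beta => exact hsp.not_isAbs trivial
    | app _ _ h => exact ih h

theorem HeadNormal.not_headStep {t X : Lam} (h : HeadNormal t) : ¬ HeadStep t X := by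
  induction h generalizing X with
  | spine h => exact h.not_headStep
  | abs _ ih =>
    intro hs
    cases hs with
    | abs h => exact ih h

theorem HeadSteps.unique_of_headNormal {M H₁ H₂ : Lam} {k₁ k₂ : ℕ}
    (h₁ : HeadSteps k₁ M H₁) (h₂ : HeadSteps k₂ M H₂)
    (hH₁ : HeadNormal H₁) (hH₂ : HeadNormal H₂) : k₁ = k₂ ∧ H₁ = H₂ := by
  induction k₁ generalizing M k₂ with
  | zero =>
    cases h₁
    cases k₂ with
    | zero => exact ⟨rfl, h₂⟩
    | succ k₂ => obtain ⟨u, hu, _⟩ := h₂; exact absurd hu hH₁.not_headStep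
  | succ k₁ ih =>
    obtain ⟨u, hu, h₁⟩ := h₁
    cases k₂ with
    | zero => cases h₂; exact absurd hu hH₂.not_headStep
    | succ k₂ =>
      obtain ⟨v, hv, h₂⟩ := h₂
      cases hu.det hv
      obtain ⟨rfl, hH⟩ := ih h₁ h₂
      exact ⟨rfl, hH⟩

theorem appList_var_inj {y y' : ℕ} {args args' : List Lam}
    (h : appList (var y) args = appList (var y') args') : y = y' ∧ args = args' := by
  induction args using List.reverseRecOn generalizing args' with
  | nil =>
    cases args' using List.reverseRecOn with
    | nil => simpa [appList] using h
    | append_singleton => simp [appList, List.foldl_append] at h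
  | append_singleton l a ih =>
    cases args' using List.reverseRecOn with
    | nil => simp [appList, List.foldl_append] at h
    | append_singleton l' a' =>
      simp only [appList, List.foldl_append, List.foldl_cons, List.foldl_nil, app.injEq] at h
      obtain ⟨rfl, rfl⟩ := ih h.1
      exact ⟨rfl, by rw [h.2]⟩

theorem absN_inj_of_not_isAbs {n n' : ℕ} {t t' : Lam} (ht : ¬ IsAbs t) (ht' : ¬ IsAbs t')
    (h : absN n t = absN n' t') : n = n' ∧ t = t' := by
  induction n generalizing n' with
  | zero =>
    cases n' with
    | zero => exact ⟨rfl, h⟩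
    | succ n' => exact (ht (by simp only [absN] at h; rw [h]; trivial)).elim
  | succ n ih =>
    cases n' with
    | zero => exact (ht' (by simp only [absN] at h; rw [← h]; trivial)).elim
    | succ n' =>
      obtain ⟨rfl, rfl⟩ := ih (abs.inj h)
      exact ⟨rfl, rfl⟩

theorem mkHnf_inj {n n' y y' : ℕ} {args args' : List Lam}
    (h : mkHnf n y args = mkHnf n' y' args') : n = n' ∧ y = y' ∧ args = args' := by
  obtain ⟨hn, h⟩ := absN_inj_of_not_isAbs (spine_appList y args).not_isAbs
    (spine_appList y' args').not_isAbs h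
  exact ⟨hn, appList_var_inj h⟩

theorem headSteps_mkHnf_unique {M : Lam} {k k' n n' y y' : ℕ} {args args' : List Lam}
    (h : HeadSteps k M (mkHnf n y args)) (h' : HeadSteps k' M (mkHnf n' y' args')) :
    k = k' ∧ n = n' ∧ y = y' ∧ args = args' := by
  obtain ⟨hk, hH⟩ := h.unique_of_headNormal h'
    (isHnf_iff_headNormal.1 ⟨n, y, args, rfl⟩) (isHnf_iff_headNormal.1 ⟨n', y', args', rfl⟩)
  exact ⟨hk, mkHnf_inj hH⟩

/-! ### Reduction does not lengthen head reduction -/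

/-- The implication `IsAbs Q → IsAbs P` is the invariant that carries the `HeadStep.app` case. -/
theorem HeadStep.par_commute {P P' Q : Lam} (hs : HeadStep P P') (hpar : Par P Q) :
    Par P' Q ∨ ∃ Q', HeadStep Q Q' ∧ Par P' Q' ∧ (IsAbs Q → IsAbs P) := by
  induction hs generalizing Q with
  | beta t u =>
    cases hpar with
    | beta ht hu => exact .inl (ht.subst 0 hu)
    | app hs hu =>
      obtain ⟨t', rfl, ht⟩ := hs.abs_inv
      exact .inr ⟨_, .beta _ _, ht.subst 0 hu, fun h => absurd h (not_isAbs_app _ _)⟩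
  | app v hna _ ih =>
    obtain ⟨s₂, v₂, rfl, hs, hv⟩ := hpar.app_inv hna
    rcases ih hs with h | ⟨s₂', hstep, hpar, himp⟩
    · exact .inl (.app h hv)
    · exact .inr ⟨_, .app _ (fun h => hna (himp h)) hstep, .app hpar hv,
        fun h => absurd h (not_isAbs_app _ _)⟩
  | abs _ ih =>
    obtain ⟨t₂, rfl, ht⟩ := hpar.abs_inv
    rcases ih ht with h | ⟨t₂', hstep, hpar, -⟩
    · exact .inl (.abs h)
    · exact .inr ⟨_, .abs hstep, .abs hpar, fun _ => trivial⟩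

theorem Par.absN_inv {n : ℕ} {t Q : Lam} (h : Par (absN n t) Q) :
    ∃ t', Q = absN n t' ∧ Par t t' := by
  induction n generalizing Q with
  | zero => exact ⟨Q, rfl, h⟩
  | succ n ih =>
    obtain ⟨w, rfl, hw⟩ := h.abs_inv
    obtain ⟨t', rfl, ht⟩ := ih hw
    exact ⟨t', rfl, ht⟩

theorem Par.appList_var_inv {y : ℕ} {args : List Lam} {Q : Lam}
    (h : Par (appList (.var y) args) Q) :
    ∃ args', Q = appList (.var y) args' ∧ List.Forall₂ Par args args' := by
  induction args using List.reverseRecOn generalizing Q with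
  | nil => exact ⟨[], h.var_inv, .nil⟩
  | append_singleton l a ih =>
    simp only [appList, List.foldl_append, List.foldl_cons, List.foldl_nil] at h
    obtain ⟨s', a', rfl, hs, ha⟩ := h.app_inv (spine_appList y l).not_isAbs
    obtain ⟨l', rfl, hl⟩ := ih hs
    refine ⟨l' ++ [a'], ?_, List.rel_append hl (.cons ha .nil)⟩
    simp [appList, List.foldl_append]

theorem Par.mkHnf_inv {n y : ℕ} {args : List Lam} {Q : Lam} (h : Par (mkHnf n y args) Q) :
    ∃ args', Q = mkHnf n y args' ∧ List.Forall₂ Par args args' := by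
  obtain ⟨t', rfl, ht⟩ := h.absN_inv
  obtain ⟨args', rfl, hargs⟩ := ht.appList_var_inv
  exact ⟨args', rfl, hargs⟩

theorem Par.headSteps_mkHnf {k : ℕ} : ∀ {P Q : Lam} {n y : ℕ} {args : List Lam},
    Par P Q → HeadSteps k P (mkHnf n y args) →
    ∃ k' args', k' ≤ k ∧ HeadSteps k' Q (mkHnf n y args') ∧
      List.Forall₂ Par args args' := by
  induction k with
  | zero =>
    intro P Q n y args hpar hsteps
    cases hsteps
    obtain ⟨args', rfl, hargs⟩ := hpar.mkHnf_inv
    exact ⟨0, args', le_rfl, rfl, hargs⟩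
  | succ k ih =>
    intro P Q n y args hpar ⟨P', hP, hrest⟩
    rcases hP.par_commute hpar with h | ⟨Q', hQ, h, -⟩
    · obtain ⟨k', args', hle, hsteps, hargs⟩ := ih h hrest
      exact ⟨k', args', by omega, hsteps, hargs⟩
    · obtain ⟨k', args', hle, hsteps, hargs⟩ := ih h hrest
      exact ⟨k' + 1, args', by omega, ⟨Q', hQ, hsteps⟩, hargs⟩

theorem _root_.List.Forall₂.reflTransGen_trans {α : Type*} {r : α → α → Prop}
    {l₁ l₂ l₃ : List α}
    (h₁₂ : List.Forall₂ (Relation.ReflTransGen r) l₁ l₂)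
    (h₂₃ : List.Forall₂ (Relation.ReflTransGen r) l₂ l₃) :
    List.Forall₂ (Relation.ReflTransGen r) l₁ l₃ := by
  induction h₁₂ generalizing l₃ with
  | nil => exact h₂₃
  | cons h _ ih =>
    cases h₂₃ with
    | cons h' hl => exact .cons (h.trans h') (ih hl)

theorem BetaStar.headSteps_mkHnf {P Q : Lam} (h : BetaStar P Q) {k n y : ℕ} {args : List Lam}
    (hP : HeadSteps k P (mkHnf n y args)) :
    ∃ k' args', k' ≤ k ∧ HeadSteps k' Q (mkHnf n y args') ∧
      List.Forall₂ BetaStar args args' := by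
  induction h generalizing k args with
  | refl => exact ⟨k, args, le_rfl, hP, List.forall₂_same.2 fun _ _ => .refl⟩
  | tail _ hstep ih =>
    obtain ⟨k₁, args₁, hle₁, h₁, hargs₁⟩ := ih hP
    obtain ⟨k₂, args₂, hle₂, h₂, hargs₂⟩ := hstep.par.headSteps_mkHnf h₁
    exact ⟨k₂, args₂, hle₂.trans hle₁, h₂,
      hargs₁.reflTransGen_trans (hargs₂.imp fun _ _ h => h.betaStar)⟩

/-! ### Head normal forms are reflected by reduction -/

theorem headStar_abs {t t' : Lam} (h : HeadStar t t') : HeadStar (abs t) (abs t') :=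
  h.lift Lam.abs fun _ _ => HeadStep.abs

theorem headStar_abs_inv {t X : Lam} (h : HeadStar (abs t) X) :
    ∃ t', X = abs t' ∧ HeadStar t t' := by
  induction h with
  | refl => exact ⟨t, rfl, .refl⟩
  | tail _ hstep ih =>
    obtain ⟨t', rfl, ht⟩ := ih
    cases hstep with
    | abs h => exact ⟨_, rfl, ht.tail h⟩

theorem HeadStep.subst {a a' : Lam} (h : HeadStep a a') :
    ∀ k b, HeadStep (Lam.subst a k b) (Lam.subst a' k b) := by
  induction h with
  | beta t u =>
    intro k b
    simp only [Lam.subst]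
    rw [subst_subst_of_le t u b (Nat.zero_le k)]
    exact .beta _ _
  | @app s s' t hna hs ih =>
    intro k b
    cases s with
    | abs => exact absurd trivial hna
    | var => cases hs
    | app => exact .app _ (not_isAbs_app _ _) (ih k b)
  | abs _ ih => intro k b; exact .abs (ih (k + 1) (lift 0 b))

theorem headStar_subst {a a' : Lam} (h : HeadStar a a') (k : ℕ) (b : Lam) :
    HeadStar (subst a k b) (subst a' k b) :=
  h.lift (subst · k b) fun _ _ h => h.subst k b

theorem HeadStep.lift {a a' : Lam} (h : HeadStep a a') :
    ∀ d, HeadStep (Lam.lift d a) (Lam.lift d a') := by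
  induction h with
  | beta t u =>
    intro d
    simp only [Lam.lift]
    rw [lift_subst_of_ge t u (Nat.zero_le d)]
    exact .beta _ _
  | app t hna _ ih => intro d; exact .app _ (fun h => hna (isAbs_lift.1 h)) (ih d)
  | abs _ ih => intro d; exact .abs (ih (d + 1))

theorem headStar_lift {a a' : Lam} (h : HeadStar a a') (d : ℕ) :
    HeadStar (lift d a) (lift d a') :=
  h.lift (Lam.lift d) fun _ _ h => h.lift d

theorem headStar_app_left {s s₁ : Lam} (h : HeadStar s s₁) (v : Lam) :
    HeadStar (app s v) (app s₁ v) ∨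
      ∃ w w₁, s₁ = abs w₁ ∧ HeadStar (app s v) (app (abs w) v) ∧ HeadStar w w₁ := by
  induction h using Relation.ReflTransGen.head_induction_on with
  | refl => exact .inl .refl
  | @head s s₂ hstep hrest ih =>
    by_cases habs : IsAbs s
    · obtain ⟨w, rfl⟩ := isAbs_iff.1 habs
      obtain ⟨w₁, rfl, hw⟩ := headStar_abs_inv (.head hstep hrest)
      exact .inr ⟨w, w₁, rfl, .refl, hw⟩
    · have hlift : HeadStep (app s v) (app s₂ v) := .app v habs hstep
      rcases ih with h | ⟨w, w₁, rfl, h, hw⟩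
      · exact .inl (.head hlift h)
      · exact .inr ⟨w, w₁, rfl, .head hlift h, hw⟩

/-- Internal parallel reduction: parallel reduction that leaves the head redex in place.
Head steps in the body of the head redex `app (abs w) t` are not head steps of the whole term,
so `appAbs` absorbs them; this is what makes `IPar.subst` hold. -/
inductive IPar : Lam → Lam → Prop
  | var (n : ℕ) : IPar (var n) (var n)
  | abs {t t' : Lam} : IPar t t' → IPar (abs t) (abs t')
  | app {s s' t t' : Lam} : ¬ IsAbs s → IPar s s' → Par t t' → IPar (app s t) (app s' t')
  | appAbs {w w₀ w' t t' : Lam} : HeadStar w w₀ → IPar w₀ w' → Par t t' →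
      IPar (app (abs w) t) (app (abs w') t')

namespace IPar

theorem abs_inv {w X : Lam} (h : IPar (.abs w) X) : ∃ w', X = .abs w' ∧ IPar w w' := by
  cases h with
  | abs h => exact ⟨_, rfl, h⟩

theorem app' {x x' v v' : Lam} (h : IPar x x') (hv : Par v v') :
    IPar (.app x v) (.app x' v') := by
  by_cases habs : IsAbs x
  · obtain ⟨w, rfl⟩ := isAbs_iff.1 habs
    obtain ⟨w', rfl, hw⟩ := h.abs_inv
    exact .appAbs .refl hw hv
  · exact .app habs h hv

theorem refl : ∀ t : Lam, IPar t t
  | .var n => .var n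
  | .app s t => app' (refl s) (.refl t)
  | .abs t => .abs (refl t)

theorem not_isAbs {s s' : Lam} (h : IPar s s') (hs : ¬ IsAbs s) : ¬ IsAbs s' := by
  cases h with
  | var n => exact hs
  | abs => exact absurd trivial hs
  | app | appAbs => exact not_isAbs_app _ _

theorem lift {t t' : Lam} (h : IPar t t') : ∀ d, IPar (Lam.lift d t) (Lam.lift d t') := by
  induction h with
  | var n => intro d; exact refl _
  | abs _ ih => intro d; exact .abs (ih (d + 1))
  | app hna _ hp ih => intro d; exact .app (fun h => hna (isAbs_lift.1 h)) (ih d) (hp.lift d)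
  | appAbs hw _ hp ih => intro d; exact .appAbs (headStar_lift hw (d + 1)) (ih (d + 1)) (hp.lift d)

theorem spine {s s' : Lam} (h : IPar s s') (hs' : Spine s') : Spine s := by
  induction h with
  | var n => exact .var n
  | abs => cases hs'
  | app _ _ _ ih =>
    cases hs' with
    | app _ h => exact .app _ (ih h)
  | appAbs =>
    cases hs' with
    | app _ h => cases h

theorem headNormal {X H : Lam} (h : IPar X H) (hH : HeadNormal H) : HeadNormal X := by
  induction hH generalizing X with
  | spine hs => exact .spine (h.spine hs)
  | abs _ ih =>
    cases h with
    | abs h => exact .abs (ih h)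

end IPar

def HeadIPar (M N : Lam) : Prop := ∃ M', HeadStar M M' ∧ IPar M' N

theorem HeadIPar.app {x x' v v' : Lam} (h : HeadIPar x x') (hv : Par v v') :
    HeadIPar (app x v) (app x' v') := by
  obtain ⟨e, hx, he⟩ := h
  rcases headStar_app_left hx v with h | ⟨w, w₁, rfl, h, hw⟩
  · exact ⟨Lam.app e v, h, he.app' hv⟩
  · obtain ⟨w', rfl, hw'⟩ := he.abs_inv
    exact ⟨Lam.app (abs w) v, h, .appAbs hw hw' hv⟩

theorem HeadIPar.lift {b b' : Lam} (h : HeadIPar b b') (d : ℕ) :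
    HeadIPar (Lam.lift d b) (Lam.lift d b') :=
  let ⟨c, hb, hc⟩ := h
  ⟨Lam.lift d c, headStar_lift hb d, hc.lift d⟩

theorem IPar.subst {a a' : Lam} (h : IPar a a') :
    ∀ k {b b' : Lam}, Par b b' → HeadIPar b b' →
      HeadIPar (Lam.subst a k b) (Lam.subst a' k b') := by
  induction h with
  | var n =>
    intro k b b' _ hb
    rcases lt_trichotomy n k with h | rfl | h
    · rw [subst_var_lt b h, subst_var_lt b' h]; exact ⟨_, .refl, .refl _⟩
    · rwa [subst_var_self, subst_var_self]
    · rw [subst_var_gt b h, subst_var_gt b' h]; exact ⟨_, .refl, .refl _⟩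
  | abs _ ih =>
    intro k b b' hpar hb
    obtain ⟨e, he, he'⟩ := ih (k + 1) (hpar.lift 0) (hb.lift 0)
    exact ⟨Lam.abs e, headStar_abs he, .abs he'⟩
  | app _ _ ht ih =>
    intro k b b' hpar hb
    exact (ih k hpar hb).app (ht.subst k hpar)
  | appAbs hw _ ht ih =>
    intro k b b' hpar hb
    obtain ⟨e, he, he'⟩ := ih (k + 1) (hpar.lift 0) (hb.lift 0)
    exact ⟨_, .refl, .appAbs ((headStar_subst hw _ _).trans he) he' (ht.subst k hpar)⟩

/-- Takahashi's factorization of a parallel step. -/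
theorem Par.headIPar {M N : Lam} (h : Par M N) : HeadIPar M N := by
  induction h with
  | var n => exact ⟨_, .refl, .refl _⟩
  | app _ ht ihs _ => exact ihs.app ht
  | abs _ ih =>
    obtain ⟨t₀, ht, ht₀⟩ := ih
    exact ⟨Lam.abs t₀, headStar_abs ht, .abs ht₀⟩
  | @beta t t' u u' _ hu iht ihu =>
    obtain ⟨t₀, ht, ht₀⟩ := iht
    obtain ⟨e, he, he'⟩ := ht₀.subst 0 hu ihu
    exact ⟨e, .head (.beta t u) ((headStar_subst ht 0 u).trans he), he'⟩

theorem IPar.headIPar_of_headStep {P Q Q' : Lam} (h : IPar P Q) (hs : HeadStep Q Q') :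
    HeadIPar P Q' := by
  induction h generalizing Q' with
  | var n => cases hs
  | abs _ ih =>
    cases hs with
    | abs hs =>
      obtain ⟨t₁, ht, ht₁⟩ := ih hs
      exact ⟨Lam.abs t₁, headStar_abs ht, .abs ht₁⟩
  | app hna hs' ht ih =>
    cases hs with
    | beta => exact absurd trivial (hs'.not_isAbs hna)
    | app _ _ hstep => exact (ih hstep).app ht
  | @appAbs w _ _ t _ hw hw₀ ht =>
    cases hs with
    | beta =>
      obtain ⟨e, he, he'⟩ := hw₀.subst 0 ht ht.headIPar
      exact ⟨e, .head (.beta w t) ((headStar_subst hw 0 t).trans he), he'⟩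
    | app _ hna => exact absurd trivial hna

theorem HasHnf.of_iPar {P Q : Lam} (h : IPar P Q) (hQ : HasHnf Q) : HasHnf P := by
  obtain ⟨k, H, hk, hH⟩ := hQ
  induction k generalizing P Q with
  | zero =>
    cases hk
    exact ⟨0, P, rfl, isHnf_iff_headNormal.2 (h.headNormal (isHnf_iff_headNormal.1 hH))⟩
  | succ k ih =>
    obtain ⟨Q', hQ, hk⟩ := hk
    obtain ⟨P', hP, hP'⟩ := h.headIPar_of_headStep hQ
    exact .of_headStar hP (ih hP' hk)

theorem HasHnf.of_par {P Q : Lam} (h : Par P Q) (hQ : HasHnf Q) : HasHnf P :=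
  let ⟨_, hP, hP'⟩ := h.headIPar
  .of_headStar hP (.of_iPar hP' hQ)

theorem BetaStar.hasHnf_iff {P Q : Lam} (h : BetaStar P Q) : HasHnf P ↔ HasHnf Q := by
  constructor
  · rintro ⟨k, _, hk, n, y, args, rfl⟩
    obtain ⟨k', args', -, hk', -⟩ := h.headSteps_mkHnf hk
    exact hasHnf_of_headSteps hk'
  · intro hQ
    induction h using Relation.ReflTransGen.head_induction_on with
    | refl => exact hQ
    | head hstep _ ih => exact .of_par hstep.par ih

theorem BetaStar.headSteps_mkHnf_of_target {P Q : Lam} (h : BetaStar P Q) {k' n y : ℕ}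
    {args' : List Lam} (hQ : HeadSteps k' Q (mkHnf n y args')) :
    ∃ k args, HeadSteps k P (mkHnf n y args) ∧ List.Forall₂ BetaStar args args' := by
  obtain ⟨k, _, hP, n₀, y₀, args, rfl⟩ := h.hasHnf_iff.2 (hasHnf_of_headSteps hQ)
  obtain ⟨k₁, args₁, -, hQ₁, hargs⟩ := h.headSteps_mkHnf hP
  obtain ⟨-, rfl, rfl, rfl⟩ := headSteps_mkHnf_unique hQ₁ hQ
  exact ⟨k, args, hP, hargs⟩

/-! ### Clocked Böhm trees along reduction -/

theorem _root_.Option.rel_ite_some_none {α β : Type*} {r : α → β → Prop} {a : α} {b : β}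
    (hab : r a b) (c : Prop) [Decidable c] :
    Option.Rel r (if c then some a else none) (if c then some b else none) := by
  split
  · exact .some hab
  · exact .none

theorem CBT.transfer {R : Lam → Lam → Prop} {r : ℕ → ℕ → Prop}
    (hasHnf_of_rel : ∀ {P Q}, R P Q → HasHnf Q → HasHnf P)
    (headSteps_of_rel : ∀ {P Q k n y args}, R P Q → HeadSteps k P (mkHnf n y args) →
      ∃ k' args', r k k' ∧ HeadSteps k' Q (mkHnf n y args') ∧ List.Forall₂ R args args')
    {P : Lam} {p : List ℕ} {o : BTN} {a : Option ℕ} (h : CBT P p o a) :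
    ∀ {Q}, R P Q → ∃ a', CBT Q p o a' ∧ Option.Rel r a a' := by
  induction h with
  | bot hP =>
    intro Q hPQ
    exact ⟨none, .bot fun hQ => hP (hasHnf_of_rel hPQ hQ), .none⟩
  | lam hs hi =>
    intro Q hPQ
    obtain ⟨k', args', hk, hs', -⟩ := headSteps_of_rel hPQ hs
    exact ⟨_, .lam hs' hi, Option.rel_ite_some_none hk _⟩
  | app hs hj =>
    intro Q hPQ
    obtain ⟨k', args', hk, hs', hargs⟩ := headSteps_of_rel hPQ hs
    exact ⟨_, .app hs' (hargs.length_eq ▸ hj), Option.rel_ite_some_none hk _⟩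
  | var hs =>
    intro Q hPQ
    obtain ⟨k', args', hk, hs', hargs⟩ := headSteps_of_rel hPQ hs
    rw [hargs.length_eq]
    exact ⟨_, .var hs', Option.rel_ite_some_none hk _⟩
  | child hs hi _ ih =>
    intro Q hPQ
    obtain ⟨k', args', hk, hs', hargs⟩ := headSteps_of_rel hPQ hs
    have hi' := hargs.length_eq ▸ hi
    obtain ⟨a', hc, ha⟩ := ih (hargs.get hi hi')
    exact ⟨a', hargs.length_eq ▸ .child hs' hi' hc, ha⟩

theorem _root_.List.replicate_append_cons_inj {α : Type*} {x y : α} (hxy : x ≠ y) {a b : ℕ}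
    {q q' : List α} (h : List.replicate a x ++ y :: q = List.replicate b x ++ y :: q') :
    a = b ∧ q = q' := by
  induction a generalizing b with
  | zero => cases b <;> simp_all [List.replicate_succ, eq_comm]
  | succ a ih =>
    cases b with
    | zero => simp [List.replicate_succ, hxy] at h
    | succ b =>
      obtain ⟨rfl, rfl⟩ := ih (List.cons_injective h)
      exact ⟨rfl, rfl⟩

/-- Once the hnf is fixed, spine positions `0ⁱ1ʲ` are told apart by their numbers of `0`s and
`1`s, and only positions below an argument contain a `2`. -/
theorem CBT.unique {M : Lam} {p : List ℕ} {o : BTN} {a : Option ℕ} (h : CBT M p o a) :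
    ∀ {p' o' a'}, CBT M p' o' a' → p = p' → o = o' ∧ a = a' := by
  induction h with
  | bot hM =>
    intro p' o' a' h' hp
    cases h' with
    | bot => exact ⟨rfl, rfl⟩
    | lam hs | app hs | var hs | child hs => exact absurd (hasHnf_of_headSteps hs) hM
  | @child _ _ _ _ _ i _ _ _ hs _ _ ih =>
    intro p' o' a' h' hp
    cases h' with
    | bot hM => exact absurd (hasHnf_of_headSteps hs) hM
    | @child _ _ _ _ _ i' _ _ _ hs' _ hc' =>
      obtain ⟨rfl, rfl, rfl, rfl⟩ := headSteps_mkHnf_unique hs hs'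
      simp only [List.append_assoc] at hp
      obtain ⟨hi, hq⟩ := List.replicate_append_cons_inj (by decide) (List.append_cancel_left hp)
      obtain rfl : i = i' := by omega
      exact ih hc' hq
    | lam hs' | app hs' | var hs' =>
      obtain ⟨rfl, rfl, rfl, rfl⟩ := headSteps_mkHnf_unique hs hs'
      simpa [List.count_replicate] using congrArg (List.count 2) hp
  | lam hs | app hs | var hs =>
    intro p' o' a' h' hp
    cases h' with
    | bot hM => exact absurd (hasHnf_of_headSteps hs) hM
    | child hs' =>
      obtain ⟨rfl, rfl, rfl, rfl⟩ := headSteps_mkHnf_unique hs hs'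
      simpa [List.count_replicate] using congrArg (List.count 2) hp
    | lam hs' | app hs' | var hs' =>
      obtain ⟨rfl, rfl, rfl, rfl⟩ := headSteps_mkHnf_unique hs hs'
      have h₀ := congrArg (List.count 0) hp
      have h₁ := congrArg (List.count 1) hp
      simp only [List.count_append, List.count_replicate_self, List.count_replicate,
        Nat.reduceBEq, Bool.false_eq_true, ↓reduceIte, add_zero, zero_add] at h₀ h₁
      subst_vars
      first | exact ⟨rfl, rfl⟩ | omega

theorem CBTle.of_betaStar {N L : Lam} (h : BetaStar N L) : CBTle L N := by
  have forward {p o a} (hc : CBT N p o a) : ∃ a', CBT L p o a' ∧ Option.Rel (· ≥ ·) a a' :=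
    hc.transfer (fun h => h.hasHnf_iff.2) (fun h hs => h.headSteps_mkHnf hs) h
  have backward {p o a} (hc : CBT L p o a) : BTNode N p o :=
    let ⟨a', hc', _⟩ := hc.transfer (R := flip BetaStar) (r := fun _ _ => True)
      (fun h => (BetaStar.hasHnf_iff h).1)
      (fun h hs =>
        let ⟨k', args', hs', hargs⟩ := BetaStar.headSteps_mkHnf_of_target h hs
        ⟨k', args', trivial, hs', hargs.flip⟩) h
    ⟨a', hc'⟩
  refine ⟨fun p o => ⟨fun ⟨_, hc⟩ => backward hc, fun ⟨_, hc⟩ => ?_⟩, ?_⟩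
  · obtain ⟨a', hc', -⟩ := forward hc
    exact ⟨a', hc'⟩
  · intro p o₁ o₂ k₁ k₂ _ hL hN
    obtain ⟨a', hL', hk⟩ := forward hN
    obtain ⟨-, rfl⟩ := hL.unique hL' rfl
    cases hk with
    | some hk => exact hk

/-- if no reduct `M'` of `M` satisfies `cBT M' ≤ cBT N`, then `M ≠β N`. -/
theorem discrimination_general (M N : Lam)
    (h : ¬ ∃ M', BetaStar M M' ∧ CBTle M' N) : ¬ Conv M N := by
  intro hMN
  obtain ⟨L, hML, hNL⟩ := hMN.exists_common_reduct
  exact h ⟨L, hML, .of_betaStar hNL⟩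

end Lam
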